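/- arXiv:2304.13099 — 5 statements merged into one kernel-verified Lean document; each statement's English description precedes it below -/
import Mathlib

section
/- Let a₀ > 0 and φ ∈ (π/2, π]. Set d = φ/2 − π/4, a_I = (a₀/cos φ)·cos(φ/2 + π/4), and b_I = −(a₀/cos φ)·sin(φ/2 + π/4). Then a_I > 0, b_I > 0, and the following three identities hold: (i) a_I·cos d + b_I·sin d = a₀, and consequently Re z(ξ + i·d) = a₀·(1 − cosh ξ) ≤ 0 for every real ξ; (ii) a_I·sin d − b_I·cos d = a₀·tan φ; (iii) b_I·sin d − a_I·cos d = 0. -/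
/-!
With `θ = φ/2 + π/4` and `C = a₀ / cos φ` one has `a_I = C cos θ`, `b_I = -C sin θ` and `d = θ - π/2`,
so `cos d = sin θ` and `sin d = -cos θ`. For `φ ∈ (π/2, π]` the angle `θ` lies in `(π/2, 3π/4]` while
`C < 0`, which gives the signs of `a_I` and `b_I`. The three identities reduce to the double-angle
formulas `2 sin θ cos θ = sin 2θ = cos φ` and `sin² θ - cos² θ = -cos 2θ = sin φ`, and the real part of
`z(ξ + i d)` is `a₀ - (a_I cos d + b_I sin d) cosh ξ`.
-/

open Real

noncomputable def hyperbolicContour (a₀ aI bI : ℝ) (w : ℂ) : ℂ :=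
  a₀ - aI * Complex.cosh w + Complex.I * bI * Complex.sinh w

theorem re_hyperbolicContour_add_mul_I (a₀ aI bI ξ d : ℝ) :
    (hyperbolicContour a₀ aI bI (ξ + d * Complex.I)).re
      = a₀ - (aI * cos d + bI * sin d) * cosh ξ := by
  simp only [hyperbolicContour, Complex.cosh_add, Complex.sinh_add, Complex.cosh_mul_I,
    Complex.sinh_mul_I, ← Complex.ofReal_cosh, ← Complex.ofReal_sinh, ← Complex.ofReal_cos,
    ← Complex.ofReal_sin, Complex.sub_re, Complex.add_re, Complex.add_im, Complex.mul_re, Complex.mul_im,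
    Complex.ofReal_re, Complex.ofReal_im, Complex.I_re, Complex.I_im]
  ring

theorem cos_half_sub_pi_div_four (φ : ℝ) : cos (φ / 2 - π / 4) = sin (φ / 2 + π / 4) := by
  rw [← cos_sub_pi_div_two]; ring_nf

theorem sin_half_sub_pi_div_four (φ : ℝ) : sin (φ / 2 - π / 4) = -cos (φ / 2 + π / 4) := by
  rw [← sin_sub_pi_div_two]; ring_nf

theorem two_mul_sin_mul_cos_half_add_pi_div_four (φ : ℝ) :
    2 * sin (φ / 2 + π / 4) * cos (φ / 2 + π / 4) = cos φ := by
  rw [← sin_two_mul, ← sin_add_pi_div_two]; ring_nf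

theorem sin_sq_sub_cos_sq_half_add_pi_div_four (φ : ℝ) :
    sin (φ / 2 + π / 4) ^ 2 - cos (φ / 2 + π / 4) ^ 2 = sin φ := by
  rw [← neg_sub, ← cos_two_mul', ← neg_neg (sin φ), ← cos_add_pi_div_two]; ring_nf

theorem sin_half_add_pi_div_four_pos {φ : ℝ} (h₁ : -(π / 2) < φ) (h₂ : φ < 3 * π / 2) :
    0 < sin (φ / 2 + π / 4) :=
  sin_pos_of_pos_of_lt_pi (by linarith) (by linarith)

theorem cos_half_add_pi_div_four_neg {φ : ℝ} (h₁ : π / 2 < φ) (h₂ : φ < 5 * π / 2) :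
    cos (φ / 2 + π / 4) < 0 :=
  cos_neg_of_pi_div_two_lt_of_lt (by linarith) (by linarith)

/-- For `a₀ > 0`, `φ ∈ (π/2, π]`, `d = φ/2 − π/4`,
`a_I = (a₀/cos φ)·cos(φ/2 + π/4)`, `b_I = −(a₀/cos φ)·sin(φ/2 + π/4)`:
both semi-axes are positive, the hyperbola `z(ξ + i d)` has its vertex at `0`
(`Re z(ξ + i d) = a₀(1 − cosh ξ) ≤ 0`), its asymptote angle is `φ`
(`a_I sin d − b_I cos d = a₀ tan φ`), and the critical hyperbola has vertical
asymptotes (`b_I sin d − a_I cos d = 0`). -/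
theorem contour_parameters_properties (a₀ φ : ℝ) (ha : 0 < a₀)
    (hφ : φ ∈ Set.Ioc (Real.pi / 2) Real.pi)
    (d aI bI : ℝ)
    (hd : d = φ / 2 - Real.pi / 4)
    (haI : aI = (a₀ / Real.cos φ) * Real.cos (φ / 2 + Real.pi / 4))
    (hbI : bI = -((a₀ / Real.cos φ) * Real.sin (φ / 2 + Real.pi / 4))) :
    0 < aI ∧ 0 < bI ∧
    (aI * Real.cos d + bI * Real.sin d = a₀ ∧
      ∀ ξ : ℝ,
        ((a₀ : ℂ) - (aI : ℂ) * Complex.cosh ((ξ : ℂ) + (d : ℂ) * Complex.I)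
            + Complex.I * (bI : ℂ) * Complex.sinh ((ξ : ℂ) + (d : ℂ) * Complex.I)).re
          = a₀ * (1 - Real.cosh ξ) ∧ a₀ * (1 - Real.cosh ξ) ≤ 0) ∧
    aI * Real.sin d - bI * Real.cos d = a₀ * Real.tan φ ∧
    bI * Real.sin d - aI * Real.cos d = 0 := by
  obtain ⟨hφ_gt, hφ_le⟩ := hφ
  have hπ := pi_pos
  have hcos : cos φ < 0 := cos_neg_of_pi_div_two_lt_of_lt hφ_gt (by linarith)
  have hC : a₀ / cos φ < 0 := div_neg_of_pos_of_neg ha hcos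
  have hsinθ := sin_half_add_pi_div_four_pos (φ := φ) (by linarith) (by linarith)
  have hcosθ := cos_half_add_pi_div_four_neg hφ_gt (by linarith)
  have hcosd : cos d = sin (φ / 2 + π / 4) := hd ▸ cos_half_sub_pi_div_four φ
  have hsind : sin d = -cos (φ / 2 + π / 4) := hd ▸ sin_half_sub_pi_div_four φ
  have h_vertex : aI * cos d + bI * sin d = a₀ := by
    rw [hcosd, hsind, haI, hbI]
    calc _ = a₀ / cos φ * (2 * sin (φ / 2 + π / 4) * cos (φ / 2 + π / 4)) := by ring
      _ = a₀ := by rw [two_mul_sin_mul_cos_half_add_pi_div_four, div_mul_cancel₀ _ hcos.ne]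
  refine ⟨haI ▸ mul_pos_of_neg_of_neg hC hcosθ,
    hbI ▸ neg_pos.2 (mul_neg_of_neg_of_pos hC hsinθ), ⟨h_vertex, fun ξ => ⟨?_, ?_⟩⟩, ?_, ?_⟩
  · rw [← hyperbolicContour, re_hyperbolicContour_add_mul_I, h_vertex]; ring
  · exact mul_nonpos_of_nonneg_of_nonpos ha.le (sub_nonpos.2 (one_le_cosh ξ))
  · rw [hcosd, hsind, haI, hbI, tan_eq_sin_div_cos,
      ← sin_sq_sub_cos_sq_half_add_pi_div_four φ]
    ring
  · rw [hcosd, hsind, haI, hbI]; ring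
end

section
/- Let a, b, a₀ be real numbers with 0 < a₀ < a ≤ b. Then for every real ξ, |−a·sinh ξ + i·b·cosh ξ| ≤ (b/(a − a₀)) · |a₀ − a·cosh ξ + i·b·sinh ξ|. Equivalently, along the hyperbola z(ξ) = a₀ − a·cosh ξ + i·b·sinh ξ (whose derivative is z'(ξ) = −a·sinh ξ + i·b·cosh ξ, and which never vanishes under these hypotheses), one has |z'(ξ)/z(ξ)| ≤ b/(a − a₀). -/
/-!
Write `c = cosh ξ`, `s = sinh ξ`. The real part `a₀ - a c` of the hyperbola is negative, so it
never vanishes. For the bound, with `k = a - a₀`, the difference of squared norms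
`b² ((a₀ - a c)² + b² s²) - k² (a² s² + b² c²)` factors as
`b² a₀ (c - 1) ((2a - a₀) c - a₀) + s² (b² - k a) (b² + k a)`,
which is nonnegative because `c ≥ 1` and `b² ≥ a² > k a`. Equality holds at `ξ = 0`.
-/

open Complex

lemma hyperbola_eq_ofReal_add_ofReal_mul_I (a b a₀ ξ : ℝ) :
    (a₀ : ℂ) - a * cosh ξ + I * b * sinh ξ
      = ↑(a₀ - a * Real.cosh ξ) + ↑(b * Real.sinh ξ) * I := by
  push_cast
  ring

lemma hyperbola_deriv_eq_ofReal_add_ofReal_mul_I (a b ξ : ℝ) :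
    -(a : ℂ) * sinh ξ + I * b * cosh ξ = ↑(-(a * Real.sinh ξ)) + ↑(b * Real.cosh ξ) * I := by
  push_cast
  ring

lemma hyperbola_deriv_sq_le {a b a₀ c : ℝ} (h₀ : 0 < a₀) (h₁ : a₀ < a) (h₂ : a ≤ b)
    (hc : 1 ≤ c) (s : ℝ) :
    (a - a₀) ^ 2 * ((-(a * s)) ^ 2 + (b * c) ^ 2) ≤ b ^ 2 * ((a₀ - a * c) ^ 2 + (b * s) ^ 2) := by
  have hfactor : b ^ 2 * ((a₀ - a * c) ^ 2 + (b * s) ^ 2)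
        - (a - a₀) ^ 2 * ((-(a * s)) ^ 2 + (b * c) ^ 2)
      = b ^ 2 * (a₀ * (c - 1) * ((2 * a - a₀) * c - a₀))
        + s ^ 2 * ((b ^ 2 - (a - a₀) * a) * (b ^ 2 + (a - a₀) * a)) := by
    ring
  have hlin : 0 ≤ (2 * a - a₀) * c - a₀ := by nlinarith
  have hdiff : 0 ≤ b ^ 2 - (a - a₀) * a := by nlinarith
  have hsum : 0 ≤ b ^ 2 + (a - a₀) * a := by nlinarith
  have hc' : 0 ≤ c - 1 := by linarith
  have : 0 ≤ b ^ 2 * (a₀ * (c - 1) * ((2 * a - a₀) * c - a₀))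
      + s ^ 2 * ((b ^ 2 - (a - a₀) * a) * (b ^ 2 + (a - a₀) * a)) := by positivity
  linarith

/-- For `0 < a₀ < a ≤ b`, along the hyperbola
`z(ξ) = a₀ − a cosh ξ + i b sinh ξ` (which never vanishes), the derivative
`z'(ξ) = −a sinh ξ + i b cosh ξ` satisfies `|z'(ξ)| ≤ (b/(a − a₀)) |z(ξ)|`. -/
theorem hyperbola_log_derivative_bound (a b a₀ : ℝ) (h₀ : 0 < a₀) (h₁ : a₀ < a)
    (h₂ : a ≤ b) (ξ : ℝ) :
    ((a₀ : ℂ) - (a : ℂ) * Complex.cosh (ξ : ℂ)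
        + Complex.I * (b : ℂ) * Complex.sinh (ξ : ℂ) ≠ 0) ∧
    ‖-(a : ℂ) * Complex.sinh (ξ : ℂ) + Complex.I * (b : ℂ) * Complex.cosh (ξ : ℂ)‖
      ≤ (b / (a - a₀)) *
        ‖(a₀ : ℂ) - (a : ℂ) * Complex.cosh (ξ : ℂ)
          + Complex.I * (b : ℂ) * Complex.sinh (ξ : ℂ)‖ := by
  have hcosh := Real.one_le_cosh ξ
  have hk : 0 < a - a₀ := sub_pos.mpr h₁
  rw [hyperbola_eq_ofReal_add_ofReal_mul_I, hyperbola_deriv_eq_ofReal_add_ofReal_mul_I]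
  refine ⟨fun h => ?_, ?_⟩
  · have hre := congrArg re h
    simp only [add_re, ofReal_re, mul_re, I_re, I_im, ofReal_im, zero_re] at hre
    nlinarith
  · have hK : 0 ≤ b / (a - a₀) := div_nonneg (by linarith) hk.le
    rw [← pow_le_pow_iff_left₀ (norm_nonneg _) (by positivity) two_ne_zero, mul_pow,
      Complex.sq_norm, Complex.sq_norm, normSq_add_mul_I, normSq_add_mul_I, div_pow,
      div_mul_eq_mul_div, le_div_iff₀ (by positivity), mul_comm]
    exact hyperbola_deriv_sq_le h₀ h₁ h₂ hcosh _
end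

section
/- Let a, b, a₀ be real numbers with 0 < a₀ < a ≤ b. Then for every real ξ, |−a·sinh ξ + i·b·cosh ξ| · cosh ξ · (a − a₀)² ≤ b · |a₀ − a·cosh ξ + i·b·sinh ξ|². Equivalently, along the hyperbola z(ξ) = a₀ − a·cosh ξ + i·b·sinh ξ with derivative z'(ξ) = −a·sinh ξ + i·b·cosh ξ, one has |z'(ξ)/z(ξ)²| ≤ b/(cosh ξ · (a − a₀)²). -/
/-! Write `s = sinh ξ`, `c = cosh ξ`. Since `a ≤ b`, `|z'|² = a²s² + b²c² ≤ b²(s² + c²)`, so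
`|z'| c ≤ b (s² + c²)`. On the other hand `a c - a₀ ≥ (a - a₀) c ≥ 0` because `c ≥ 1`, and
`b ≥ a - a₀`, so `|z|² = (a c - a₀)² + b²s² ≥ (a - a₀)² (c² + s²)`. Multiplying the two bounds
gives the claim; the identity `c² - s² = 1` is never needed. -/

open Complex in
lemma hyperbola_deriv_eq_add_mul_I (a b ξ : ℝ) :
    -(a : ℂ) * sinh ξ + I * b * cosh ξ
      = ((-a * Real.sinh ξ : ℝ) : ℂ) + ((b * Real.cosh ξ : ℝ) : ℂ) * I := by
  push_cast
  ring

open Complex in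
lemma hyperbola_eq_add_mul_I (a b a₀ ξ : ℝ) :
    (a₀ : ℂ) - a * cosh ξ + I * b * sinh ξ
      = ((a₀ - a * Real.cosh ξ : ℝ) : ℂ) + ((b * Real.sinh ξ : ℝ) : ℂ) * I := by
  push_cast
  ring

lemma sqrt_sq_add_sq_mul_le {a b s c : ℝ} (hab : a ^ 2 ≤ b ^ 2) (hb : 0 ≤ b) (hc : 0 ≤ c) :
    √((-a * s) ^ 2 + (b * c) ^ 2) * c ≤ b * (s ^ 2 + c ^ 2) := by
  have hsq : (√((-a * s) ^ 2 + (b * c) ^ 2) * c) ^ 2 ≤ (b * (s ^ 2 + c ^ 2)) ^ 2 := by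
    rw [mul_pow, Real.sq_sqrt (by positivity)]
    nlinarith [mul_le_mul_of_nonneg_right hab (mul_nonneg (sq_nonneg s) (sq_nonneg c)),
      mul_nonneg (sq_nonneg b) (mul_nonneg (sq_nonneg s) (add_nonneg (sq_nonneg s) (sq_nonneg c)))]
  exact (pow_le_pow_iff_left₀ (by positivity) (by positivity) two_ne_zero).mp hsq

lemma sq_sub_mul_le_sq_sub {a a₀ c : ℝ} (h₀ : 0 ≤ a₀) (h₁ : a₀ ≤ a) (hc : 1 ≤ c) :
    ((a - a₀) * c) ^ 2 ≤ (a₀ - a * c) ^ 2 := by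
  rw [← neg_sq (a₀ - a * c), neg_sub]
  refine pow_le_pow_left₀ (mul_nonneg (sub_nonneg.mpr h₁) (by linarith)) ?_ 2
  nlinarith

lemma hyperbola_bound_of_one_le {a b a₀ s c : ℝ} (h₀ : 0 ≤ a₀) (h₁ : a₀ ≤ a) (h₂ : a ≤ b)
    (hc : 1 ≤ c) :
    √((-a * s) ^ 2 + (b * c) ^ 2) * c * (a - a₀) ^ 2
      ≤ b * ((a₀ - a * c) ^ 2 + (b * s) ^ 2) := by
  have hb : 0 ≤ b := by linarith
  have hab : a ^ 2 ≤ b ^ 2 := pow_le_pow_left₀ (by linarith) h₂ 2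
  calc √((-a * s) ^ 2 + (b * c) ^ 2) * c * (a - a₀) ^ 2
      ≤ b * (s ^ 2 + c ^ 2) * (a - a₀) ^ 2 := by
        gcongr ?_ * _
        exact sqrt_sq_add_sq_mul_le hab hb (by linarith)
    _ = b * (((a - a₀) * c) ^ 2 + (a - a₀) ^ 2 * s ^ 2) := by ring
    _ ≤ b * ((a₀ - a * c) ^ 2 + (b * s) ^ 2) := by
        rw [mul_pow b s]
        gcongr b * (?_ + ?_ * _)
        · exact sq_sub_mul_le_sq_sub h₀ h₁ hc
        · exact pow_le_pow_left₀ (by linarith) (by linarith) 2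

/-- For `0 < a₀ < a ≤ b`, along the hyperbola
`z(ξ) = a₀ − a cosh ξ + i b sinh ξ` with derivative
`z'(ξ) = −a sinh ξ + i b cosh ξ`, one has
`|z'(ξ)| · cosh ξ · (a − a₀)² ≤ b · |z(ξ)|²`, i.e.
`|z'(ξ)/z(ξ)²| ≤ b/(cosh ξ · (a − a₀)²)`. -/
theorem hyperbola_second_derivative_bound (a b a₀ : ℝ) (h₀ : 0 < a₀) (h₁ : a₀ < a)
    (h₂ : a ≤ b) (ξ : ℝ) :
    ‖-(a : ℂ) * Complex.sinh (ξ : ℂ) + Complex.I * (b : ℂ) * Complex.cosh (ξ : ℂ)‖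
        * Real.cosh ξ * (a - a₀) ^ 2
      ≤ b * ‖(a₀ : ℂ) - (a : ℂ) * Complex.cosh (ξ : ℂ)
          + Complex.I * (b : ℂ) * Complex.sinh (ξ : ℂ)‖ ^ 2 := by
  rw [hyperbola_deriv_eq_add_mul_I, hyperbola_eq_add_mul_I, Complex.norm_add_mul_I,
    Complex.sq_norm, Complex.normSq_add_mul_I]
  exact hyperbola_bound_of_one_le h₀.le h₁.le h₂ (Real.one_le_cosh ξ)
end

section
/- Let a₀, a_I, b_I be real numbers with 0 < a_I < a₀ and b_I > 0, and let t > 0. Then (1/(2πi)) · ∫_{−∞}^{∞} e^{t·z(ξ)} · z'(ξ)/z(ξ) dξ = 1, where z(ξ) = a₀ − a_I·cosh ξ + i·b_I·sinh ξ and z'(ξ) = −a_I·sinh ξ + i·b_I·cosh ξ; in particular z(ξ) ≠ 0 for all ξ and the integral converges absolutely. -/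
/-!
Let `G` be an entire primitive of `(e^{tw} - 1)/w`. Then `G + log` is a primitive of `e^{tw}/w`
on the slit plane, which contains the contour, so the integral over `[-R, R]` is the increment of
`G + log` from `z(-R) = conj (z R)` to `z R`. Replacing `log w` by `log (-w)`, a branch that is
holomorphic on `Re w < 0`, changes this increment by exactly `2πi`, since the two branches differ
by `+πi` above the real axis and by `-πi` below it. What remains is the increment of
`G + log (-·)` along the vertical segment from `conj (z R)` to `z R`, which is at most
`2 |Im z(R)| e^{t Re z(R)} / |Re z(R)|` and tends to `0` because `Re z(R) ~ -a_I cosh R`.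
-/

open MeasureTheory

/-- The hyperbolic contour `z(ξ) = a₀ − a_I cosh ξ + i b_I sinh ξ`. -/
noncomputable def zContour (a₀ aI bI ξ : ℝ) : ℂ :=
  (a₀ : ℂ) - (aI : ℂ) * Complex.cosh (ξ : ℂ) + Complex.I * (bI : ℂ) * Complex.sinh (ξ : ℂ)

/-- Its derivative `z'(ξ) = −a_I sinh ξ + i b_I cosh ξ`. -/
noncomputable def zContour' (aI bI ξ : ℝ) : ℂ :=
  -(aI : ℂ) * Complex.sinh (ξ : ℂ) + Complex.I * (bI : ℂ) * Complex.cosh (ξ : ℂ)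

open Set Filter Topology Complex ComplexConjugate

namespace Real

lemma sq_div_four_le_cosh (x : ℝ) : x ^ 2 / 4 ≤ cosh x := by
  have hexp := quadratic_le_exp_of_nonneg (abs_nonneg x)
  rw [← cosh_abs, cosh_eq, ← sq_abs x]
  nlinarith [exp_pos (-|x|), abs_nonneg x]

lemma abs_sinh_le_cosh (x : ℝ) : |sinh x| ≤ cosh x :=
  abs_le_of_sq_le_sq (by nlinarith [cosh_sq x]) (cosh_pos x).le

lemma tendsto_cosh_atTop : Tendsto cosh atTop atTop :=
  tendsto_atTop_mono sq_div_four_le_cosh ((tendsto_pow_atTop two_ne_zero).atTop_div_const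
    four_pos)

lemma mul_exp_neg_mul_le {c : ℝ} (hc : 0 < c) (y : ℝ) :
    y * exp (-(c * y)) ≤ 2 / c * exp (-(c / 2 * y)) := by
  have hy : y ≤ 2 / c * exp (c / 2 * y) := by
    have := add_one_le_exp (c / 2 * y)
    rw [div_mul_eq_mul_div, le_div_iff₀ hc]
    nlinarith [exp_pos (c / 2 * y)]
  calc y * exp (-(c * y)) ≤ 2 / c * exp (c / 2 * y) * exp (-(c * y)) := by gcongr
    _ = 2 / c * exp (-(c / 2 * y)) := by rw [mul_assoc, ← exp_add]; ring_nf

lemma cosh_mul_exp_neg_mul_cosh_le {c : ℝ} (hc : 0 < c) (x : ℝ) :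
    cosh x * exp (-(c * cosh x)) ≤ 2 / c * exp (-(c / 8) * x ^ 2) := by
  refine (mul_exp_neg_mul_le hc _).trans ?_
  gcongr
  nlinarith [sq_div_four_le_cosh x]

lemma integrable_cosh_mul_exp_neg_mul_cosh {c : ℝ} (hc : 0 < c) :
    Integrable fun x ↦ cosh x * exp (-(c * cosh x)) := by
  refine ((integrable_exp_neg_mul_sq (by positivity : 0 < c / 8)).const_mul (2 / c)).mono'
    (by fun_prop) (.of_forall fun x ↦ ?_)
  rw [norm_of_nonneg (by positivity)]
  exact cosh_mul_exp_neg_mul_cosh_le hc x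

lemma tendsto_cosh_mul_exp_neg_mul_cosh_atTop {c : ℝ} (hc : 0 < c) :
    Tendsto (fun x ↦ cosh x * exp (-(c * cosh x))) atTop (𝓝 0) := by
  have hgauss : Tendsto (fun x : ℝ ↦ 2 / c * exp (-(c / 8) * x ^ 2)) atTop (𝓝 0) := by
    simpa using (tendsto_exp_atBot.comp ((tendsto_pow_atTop two_ne_zero).const_mul_atTop_of_neg
      (by linarith : -(c / 8) < 0))).const_mul (2 / c)
  exact squeeze_zero (fun x ↦ by positivity) (cosh_mul_exp_neg_mul_cosh_le hc) hgauss

end Real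

namespace Complex

theorem exists_hasDerivAt_exp_mul_sub_one_div (t : ℂ) :
    ∃ G : ℂ → ℂ, ∀ w ≠ 0, HasDerivAt G ((exp (t * w) - 1) / w) w := by
  have hd : Differentiable ℂ (dslope (fun w ↦ exp (t * w)) 0) := by
    rw [← differentiableOn_univ, differentiableOn_dslope univ_mem, differentiableOn_univ]
    fun_prop
  obtain ⟨G, hG⟩ := hd.isExactOn_univ
  refine ⟨G, fun w hw ↦ ?_⟩
  have h := hG w (mem_univ w)
  rwa [dslope_of_ne _ hw, slope_def_field, sub_zero, mul_zero, exp_zero] at h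

lemma log_eq_log_neg_add_pi_mul_I {w : ℂ} (hw : 0 < w.im) : log w = log (-w) + Real.pi * I := by
  apply Complex.ext <;> simp [log_re, log_im, arg_neg_eq_arg_sub_pi_of_im_pos hw]

lemma hasDerivAt_add_log {G : ℂ → ℂ} {t : ℂ}
    (hG : ∀ w ≠ 0, HasDerivAt G ((exp (t * w) - 1) / w) w) {w : ℂ}
    (hw : w ∈ slitPlane) :
    HasDerivAt (fun w ↦ G w + log w) (exp (t * w) / w) w := by
  refine ((hG w (slitPlane_ne_zero hw)).add (hasDerivAt_log hw)).congr_deriv ?_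
  field_simp [slitPlane_ne_zero hw]
  ring

lemma hasDerivAt_add_log_neg {G : ℂ → ℂ} {t : ℂ}
    (hG : ∀ w ≠ 0, HasDerivAt G ((exp (t * w) - 1) / w) w) {w : ℂ}
    (hw : -w ∈ slitPlane) :
    HasDerivAt (fun w ↦ G w + log (-w)) (exp (t * w) / w) w := by
  have hw0 : w ≠ 0 := neg_ne_zero.1 (slitPlane_ne_zero hw)
  refine ((hG w hw0).add ((hasDerivAt_log hw).comp w (hasDerivAt_neg w))).congr_deriv ?_
  field_simp
  ring

lemma norm_add_log_neg_sub_conj_le {G : ℂ → ℂ} {t : ℝ}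
    (hG : ∀ w ≠ 0, HasDerivAt G ((exp (t * w) - 1) / w) w) {w : ℂ} (hw : w.re < 0) :
    ‖G w + log (-w) - (G (conj w) + log (-conj w))‖ ≤
      Real.exp (t * w.re) / -w.re * (2 * |w.im|) := by
  set s : Set ℂ := {u | u.re ≤ w.re} ∩ {u | w.re ≤ u.re}
  have hs : Convex ℝ s := (convex_halfSpace_re_le _).inter (convex_halfSpace_re_ge _)
  have hmem : ∀ u ∈ s, u.re = w.re := fun u hu ↦ le_antisymm hu.1 hu.2
  have hderiv : ∀ u ∈ s, HasDerivWithinAt (fun u ↦ G u + log (-u)) (exp (t * u) / u) s u :=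
    fun u hu ↦
      (hasDerivAt_add_log_neg hG (by simp [mem_slitPlane_iff, hmem u hu, hw])).hasDerivWithinAt
  have hbound : ∀ u ∈ s, ‖exp (t * u) / u‖ ≤ Real.exp (t * w.re) / -w.re := fun u hu ↦ by
    rw [norm_div, norm_exp, re_ofReal_mul, hmem u hu]
    gcongr
    · linarith
    · simpa [abs_of_neg hw, hmem u hu] using abs_re_le_norm u
  have h := hs.norm_image_sub_le_of_norm_hasDerivWithin_le hderiv hbound
    (x := conj w) (y := w) (by simp [s]) (by simp [s])
  rwa [sub_conj, norm_mul, norm_I, mul_one, norm_real, Real.norm_eq_abs, abs_mul,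
    abs_two] at h

end Complex

section Contour

variable {a₀ aI bI : ℝ}

lemma zContour_re (a₀ aI bI ξ : ℝ) : (zContour a₀ aI bI ξ).re = a₀ - aI * Real.cosh ξ := by
  simp [zContour, ← ofReal_cosh, ← ofReal_sinh]

lemma zContour_im (a₀ aI bI ξ : ℝ) : (zContour a₀ aI bI ξ).im = bI * Real.sinh ξ := by
  simp [zContour, ← ofReal_cosh, ← ofReal_sinh]

lemma zContour_neg (a₀ aI bI ξ : ℝ) : zContour a₀ aI bI (-ξ) = conj (zContour a₀ aI bI ξ) := by
  apply Complex.ext <;> simp [zContour_re, zContour_im]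

lemma hasDerivAt_zContour (a₀ aI bI ξ : ℝ) :
    HasDerivAt (zContour a₀ aI bI) (zContour' aI bI ξ) ξ := by
  have h := (((hasDerivAt_cosh (ξ : ℂ)).const_mul (aI : ℂ)).const_sub (a₀ : ℂ)).add
    ((hasDerivAt_sinh (ξ : ℂ)).const_mul (I * bI))
  exact (h.congr_deriv (by simp [zContour'])).comp_ofReal

lemma norm_zContour'_le (h1 : 0 ≤ aI) (h3 : 0 ≤ bI) (ξ : ℝ) :
    ‖zContour' aI bI ξ‖ ≤ (aI + bI) * Real.cosh ξ := by
  have hre : (zContour' aI bI ξ).re = -(aI * Real.sinh ξ) := by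
    simp [zContour', ← ofReal_cosh, ← ofReal_sinh]
  have him : (zContour' aI bI ξ).im = bI * Real.cosh ξ := by
    simp [zContour', ← ofReal_cosh, ← ofReal_sinh]
  calc ‖zContour' aI bI ξ‖ ≤ |(zContour' aI bI ξ).re| + |(zContour' aI bI ξ).im| :=
        norm_le_abs_re_add_abs_im _
    _ = aI * |Real.sinh ξ| + bI * Real.cosh ξ := by
        rw [hre, him, abs_neg, abs_mul, abs_mul, abs_of_nonneg h1, abs_of_nonneg h3,
          abs_of_pos (Real.cosh_pos ξ)]
    _ ≤ (aI + bI) * Real.cosh ξ := by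
        nlinarith [mul_le_mul_of_nonneg_left (Real.abs_sinh_le_cosh ξ) h1]

lemma zContour_mem_slitPlane (h2 : aI < a₀) (h3 : 0 < bI) (ξ : ℝ) :
    zContour a₀ aI bI ξ ∈ slitPlane := by
  rw [mem_slitPlane_iff, zContour_re, zContour_im]
  rcases eq_or_ne ξ 0 with rfl | hξ
  · simp [h2]
  · exact Or.inr (mul_ne_zero h3.ne' (Real.sinh_ne_zero.2 hξ))

lemma le_norm_zContour (h1 : 0 < aI) (h2 : aI < a₀) (h3 : 0 < bI) (ξ : ℝ) :
    (a₀ - aI) / 2 * min 1 (bI / aI) ≤ ‖zContour a₀ aI bI ξ‖ := by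
  have hδ : 0 < (a₀ - aI) / 2 := by linarith
  rcases le_or_gt (aI * (Real.cosh ξ - 1)) ((a₀ - aI) / 2) with hnear | hfar
  · calc (a₀ - aI) / 2 * min 1 (bI / aI) ≤ (a₀ - aI) / 2 :=
          mul_le_of_le_one_right hδ.le (min_le_left _ _)
      _ ≤ (zContour a₀ aI bI ξ).re := by rw [zContour_re]; linarith
      _ ≤ ‖zContour a₀ aI bI ξ‖ := re_le_norm _
  · have hsinh : Real.cosh ξ - 1 ≤ |Real.sinh ξ| := by
      nlinarith [sq_abs (Real.sinh ξ), Real.cosh_sq ξ, Real.one_le_cosh ξ,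
        abs_nonneg (Real.sinh ξ)]
    calc (a₀ - aI) / 2 * min 1 (bI / aI) ≤ (a₀ - aI) / 2 * (bI / aI) := by
          gcongr; exact min_le_right _ _
      _ = bI * ((a₀ - aI) / 2 / aI) := by ring
      _ ≤ bI * |Real.sinh ξ| := by
          gcongr
          rw [div_le_iff₀ h1]
          nlinarith
      _ = |(zContour a₀ aI bI ξ).im| := by rw [zContour_im, abs_mul, abs_of_pos h3]
      _ ≤ ‖zContour a₀ aI bI ξ‖ := abs_im_le_norm _

end Contour

section Integrand

variable {a₀ aI bI t : ℝ}

noncomputable def contourIntegrand (a₀ aI bI t ξ : ℝ) : ℂ :=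
  exp (t * zContour a₀ aI bI ξ) * zContour' aI bI ξ / zContour a₀ aI bI ξ

lemma norm_exp_mul_zContour (a₀ aI bI t ξ : ℝ) :
    ‖exp (t * zContour a₀ aI bI ξ)‖ = Real.exp (t * a₀) * Real.exp (-(t * aI * Real.cosh ξ)) := by
  rw [norm_exp, re_ofReal_mul, zContour_re, ← Real.exp_add]
  ring_nf

lemma continuous_contourIntegrand (h2 : aI < a₀) (h3 : 0 < bI) :
    Continuous (contourIntegrand a₀ aI bI t) := by
  have hz : Continuous (zContour a₀ aI bI) := by unfold zContour; fun_prop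
  have hz' : Continuous (zContour' aI bI) := by unfold zContour'; fun_prop
  exact ((continuous_const.mul hz).cexp.mul hz').div hz
    fun ξ ↦ slitPlane_ne_zero (zContour_mem_slitPlane h2 h3 ξ)

lemma integrable_contourIntegrand (h1 : 0 < aI) (h2 : aI < a₀) (h3 : 0 < bI) (ht : 0 < t) :
    Integrable (contourIntegrand a₀ aI bI t) := by
  set m := (a₀ - aI) / 2 * min 1 (bI / aI)
  have hm : 0 < m := mul_pos (by linarith) (lt_min one_pos (div_pos h3 h1))
  refine (((Real.integrable_cosh_mul_exp_neg_mul_cosh (mul_pos ht h1)).const_mul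
    (Real.exp (t * a₀) * (aI + bI) / m))).mono'
    (continuous_contourIntegrand h2 h3).aestronglyMeasurable (.of_forall fun ξ ↦ ?_)
  calc ‖contourIntegrand a₀ aI bI t ξ‖
      = ‖exp (t * zContour a₀ aI bI ξ)‖ * ‖zContour' aI bI ξ‖ / ‖zContour a₀ aI bI ξ‖ := by
        rw [contourIntegrand, norm_div, norm_mul]
    _ ≤ Real.exp (t * a₀) * Real.exp (-(t * aI * Real.cosh ξ)) * ((aI + bI) * Real.cosh ξ) / m := by
        rw [norm_exp_mul_zContour]
        gcongr
        · exact norm_zContour'_le h1.le h3.le ξ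
        · exact le_norm_zContour h1 h2 h3 ξ
    _ = _ := by ring

lemma hasDerivAt_add_log_zContour {G : ℂ → ℂ}
    (hG : ∀ w ≠ 0, HasDerivAt G ((exp (t * w) - 1) / w) w) (h2 : aI < a₀) (h3 : 0 < bI)
    (ξ : ℝ) :
    HasDerivAt (fun ξ : ℝ ↦ G (zContour a₀ aI bI ξ) + log (zContour a₀ aI bI ξ))
      (contourIntegrand a₀ aI bI t ξ) ξ :=
  ((hasDerivAt_add_log hG (zContour_mem_slitPlane h2 h3 ξ)).comp ξ
    (hasDerivAt_zContour a₀ aI bI ξ)).congr_deriv (div_mul_eq_mul_div _ _ _)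

lemma intervalIntegral_contourIntegrand_eq {G : ℂ → ℂ}
    (hG : ∀ w ≠ 0, HasDerivAt G ((exp (t * w) - 1) / w) w) (h2 : aI < a₀) (h3 : 0 < bI)
    {R : ℝ} (hR : 0 < R) :
    ∫ ξ in -R..R, contourIntegrand a₀ aI bI t ξ =
      2 * Real.pi * I + (G (zContour a₀ aI bI R) + log (-zContour a₀ aI bI R) -
        (G (conj (zContour a₀ aI bI R)) + log (-conj (zContour a₀ aI bI R)))) := by
  rw [intervalIntegral.integral_eq_sub_of_hasDerivAt
    (fun ξ _ ↦ hasDerivAt_add_log_zContour hG h2 h3 ξ)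
    ((continuous_contourIntegrand h2 h3).intervalIntegrable _ _), zContour_neg]
  set w := zContour a₀ aI bI R
  have hw : 0 < w.im := by rw [zContour_im]; exact mul_pos h3 (Real.sinh_pos_iff.2 hR)
  have hconj : log (conj w) = log (-conj w) - Real.pi * I := by
    rw [log_eq_log_neg_add_pi_mul_I (w := -conj w) (by simpa using hw), neg_neg]
    ring
  rw [log_eq_log_neg_add_pi_mul_I hw, hconj]
  ring

lemma tendsto_intervalIntegral_contourIntegrand (h1 : 0 < aI) (h2 : aI < a₀) (h3 : 0 < bI)
    (ht : 0 < t) :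
    Tendsto (fun R ↦ ∫ ξ in -R..R, contourIntegrand a₀ aI bI t ξ) atTop
      (𝓝 (2 * Real.pi * I)) := by
  obtain ⟨G, hG⟩ := exists_hasDerivAt_exp_mul_sub_one_div t
  rw [tendsto_iff_norm_sub_tendsto_zero]
  have hbound : Tendsto (fun R ↦ 2 * bI * Real.exp (t * a₀) *
      (Real.cosh R * Real.exp (-(t * aI * Real.cosh R)))) atTop (𝓝 0) := by
    simpa using (Real.tendsto_cosh_mul_exp_neg_mul_cosh_atTop (mul_pos ht h1)).const_mul
      (2 * bI * Real.exp (t * a₀))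
  refine squeeze_zero' (.of_forall fun _ ↦ norm_nonneg _) ?_ hbound
  filter_upwards [eventually_gt_atTop 0,
    Real.tendsto_cosh_atTop.eventually_ge_atTop ((a₀ + 1) / aI)] with R hR hcosh
  set w := zContour a₀ aI bI R
  have hre : w.re ≤ -1 := by
    rw [zContour_re]
    rw [div_le_iff₀ h1] at hcosh
    linarith
  have him : |w.im| ≤ bI * Real.cosh R := by
    rw [zContour_im, abs_mul, abs_of_pos h3]
    exact mul_le_mul_of_nonneg_left (Real.abs_sinh_le_cosh R) h3.le
  rw [intervalIntegral_contourIntegrand_eq hG h2 h3 hR, add_sub_cancel_left]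
  calc _ ≤ Real.exp (t * w.re) / -w.re * (2 * |w.im|) :=
        norm_add_log_neg_sub_conj_le hG (by linarith)
    _ ≤ Real.exp (t * w.re) * (2 * (bI * Real.cosh R)) := by
        gcongr
        exact div_le_self (Real.exp_pos _).le (by linarith)
    _ = _ := by
        rw [zContour_re, show t * (a₀ - aI * Real.cosh R) = t * a₀ + -(t * aI * Real.cosh R) by
          ring, Real.exp_add]
        ring

end Integrand

/-- For `0 < a_I < a₀`, `b_I > 0` and `t > 0`, the residue identity
`(1/(2πi)) ∫ℝ e^{t z(ξ)} z'(ξ)/z(ξ) dξ = 1` holds along the hyperbolic contour;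
in particular `z(ξ) ≠ 0` everywhere and the integral converges absolutely. -/
theorem residue_identity_hyperbolic_contour (a₀ aI bI t : ℝ)
    (h1 : 0 < aI) (h2 : aI < a₀) (h3 : 0 < bI) (ht : 0 < t) :
    (∀ ξ : ℝ, zContour a₀ aI bI ξ ≠ 0) ∧
    Integrable (fun ξ : ℝ =>
      Complex.exp ((t : ℂ) * zContour a₀ aI bI ξ) * zContour' aI bI ξ / zContour a₀ aI bI ξ) ∧
    (1 / (2 * (Real.pi : ℂ) * Complex.I)) *
        ∫ ξ : ℝ, Complex.exp ((t : ℂ) * zContour a₀ aI bI ξ) * zContour' aI bI ξ /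
          zContour a₀ aI bI ξ = 1 := by
  have hint : Integrable (contourIntegrand a₀ aI bI t) := integrable_contourIntegrand h1 h2 h3 ht
  have hval : ∫ ξ, contourIntegrand a₀ aI bI t ξ = 2 * Real.pi * I :=
    tendsto_nhds_unique (intervalIntegral_tendsto_integral hint tendsto_neg_atTop_atBot tendsto_id)
      (tendsto_intervalIntegral_contourIntegrand h1 h2 h3 ht)
  refine ⟨fun ξ ↦ slitPlane_ne_zero (zContour_mem_slitPlane h2 h3 ξ), hint, ?_⟩
  change 1 / (2 * (Real.pi : ℂ) * I) * ∫ ξ, contourIntegrand a₀ aI bI t ξ = 1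
  rw [hval]
  field_simp [Real.pi_ne_zero]
end

section
/- Let X be a complex Banach space, A : X → X a bounded linear operator, α > 0 and β ≥ 1 real, m a natural number, z a nonzero complex number, and M > 0. Assume that z^α·I − A is invertible in the algebra of bounded operators with ‖(z^α·I − A)^{-1}‖ ≤ M/(1 + |z|^α). Then for every x ∈ X, ‖ z^{α−β} (z^α·I − A)^{-1} x − z^{−β} ∑_{k=0}^{m} z^{−αk} A^k x ‖ ≤ M·‖A^{m+1} x‖ / ( |z|^{mα+β} · (1 + |z|^α) ). -/
/-!
Multiplying `R (w • 1 - A) = 1` on the right by `A ^ n` gives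
`R A^n = w⁻¹ A^n + w⁻¹ R A^(n+1)`, and iterating this from `n = 0` expands the resolvent
`R = (w • 1 - A)⁻¹` into its Neumann sum `∑_{k ≤ m} w^{-(k+1)} A^k` plus the exact remainder
`w^{-(m+1)} R A^{m+1}`. With `w = z^α`, the prefactor `z^{α-β}` turns the sum into the
subtracted one and the remainder coefficient into `z^{-(mα+β)}`, of modulus `|z|^{-(mα+β)}`;
the resolvent bound then does the rest.
-/

open Finset

section NeumannExpansion

variable {𝕜 A : Type*} [Field 𝕜] [Ring A] [Algebra 𝕜 A]

theorem mul_pow_eq_of_mul_smul_one_sub_eq_one {r a : A} {w : 𝕜} (hw : w ≠ 0)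
    (h : r * (w • 1 - a) = 1) (n : ℕ) :
    r * a ^ n = w⁻¹ • a ^ n + w⁻¹ • (r * a ^ (n + 1)) := by
  have hn : w • (r * a ^ n) - r * a ^ (n + 1) = a ^ n := by
    calc w • (r * a ^ n) - r * a ^ (n + 1) = r * (w • 1 - a) * a ^ n := by
          rw [mul_sub, sub_mul, mul_smul_comm, mul_one, smul_mul_assoc, mul_assoc, pow_succ']
      _ = a ^ n := by rw [h, one_mul]
  rw [← smul_add, ← sub_eq_iff_eq_add.mp hn, inv_smul_smul₀ hw]

theorem Ring.inverse_smul_one_sub_eq_sum_add {a : A} {w : 𝕜} (hw : w ≠ 0)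
    (h : IsUnit (w • (1 : A) - a)) (m : ℕ) :
    Ring.inverse (w • 1 - a) = ∑ k ∈ range (m + 1), (w ^ (k + 1))⁻¹ • a ^ k
      + (w ^ (m + 1))⁻¹ • (Ring.inverse (w • 1 - a) * a ^ (m + 1)) := by
  have hr := Ring.inverse_mul_cancel _ h
  induction m with
  | zero => simpa using mul_pow_eq_of_mul_smul_one_sub_eq_one hw hr 0
  | succ m ih =>
    nth_rewrite 1 [ih]
    rw [mul_pow_eq_of_mul_smul_one_sub_eq_one hw hr (m + 1), sum_range_succ _ (m + 1),
      smul_add, smul_smul, smul_smul, ← mul_inv, ← pow_succ, ← add_assoc]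

end NeumannExpansion

namespace Complex

theorem cpow_sub_mul_inv_cpow_pow {z : ℂ} (hz : z ≠ 0) (a b : ℂ) (k : ℕ) :
    z ^ (a - b) * ((z ^ a) ^ (k + 1))⁻¹ = z ^ (-b) * z ^ (-(a * k)) := by
  rw [← cpow_nat_mul, ← cpow_neg, ← cpow_add _ _ hz, ← cpow_add _ _ hz]
  congr 1
  push_cast
  ring

theorem norm_cpow_neg_mul_cpow_neg {z : ℂ} (hz : z ≠ 0) (a b : ℝ) (k : ℕ) :
    ‖z ^ (-(b : ℂ)) * z ^ (-((a : ℂ) * k))‖ = (‖z‖ ^ ((k : ℝ) * a + b))⁻¹ := by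
  rw [← cpow_add _ _ hz, ← Real.rpow_neg (norm_nonneg z), ← norm_cpow_real]
  congr 2
  push_cast
  ring

end Complex

theorem resolvent_neumann_remainder_bound_general
    {X : Type*} [NormedAddCommGroup X] [NormedSpace ℂ X]
    (A : X →L[ℂ] X) (α β : ℝ) (m : ℕ)
    (z : ℂ) (hz : z ≠ 0) (M : ℝ)
    (hinv : IsUnit ((z ^ (α : ℂ)) • (1 : X →L[ℂ] X) - A))
    (hbound : ‖Ring.inverse ((z ^ (α : ℂ)) • (1 : X →L[ℂ] X) - A)‖
      ≤ M / (1 + ‖z‖ ^ α)) :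
    ∀ x : X,
      ‖(z ^ ((α : ℂ) - (β : ℂ))) •
            (Ring.inverse ((z ^ (α : ℂ)) • (1 : X →L[ℂ] X) - A)) x
          - (z ^ (-(β : ℂ))) • ∑ k ∈ Finset.range (m + 1),
              (z ^ (-((α : ℂ) * (k : ℂ)))) • (A ^ k) x‖
        ≤ M * ‖(A ^ (m + 1)) x‖ /
            (‖z‖ ^ ((m : ℝ) * α + β) * (1 + ‖z‖ ^ α)) := by
  intro x
  have hzα : z ^ (α : ℂ) ≠ 0 := by simp [hz]
  have hexpansion := Ring.inverse_smul_one_sub_eq_sum_add hzα hinv m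
  set R := Ring.inverse ((z ^ (α : ℂ)) • (1 : X →L[ℂ] X) - A)
  have hremainder : z ^ ((α : ℂ) - β) • R x
      - z ^ (-(β : ℂ)) • ∑ k ∈ range (m + 1), z ^ (-((α : ℂ) * k)) • (A ^ k) x
      = (z ^ (-(β : ℂ)) * z ^ (-((α : ℂ) * m))) • R ((A ^ (m + 1)) x) := by
    conv_lhs => rw [hexpansion]
    simp only [add_apply, _root_.sum_apply, smul_apply, mul_apply_eq_comp,
      smul_add, smul_sum, smul_smul, Complex.cpow_sub_mul_inv_cpow_pow hz, add_sub_cancel_left]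
  rw [hremainder, norm_smul, Complex.norm_cpow_neg_mul_cpow_neg hz, inv_mul_eq_div]
  calc ‖R ((A ^ (m + 1)) x)‖ / ‖z‖ ^ ((m : ℝ) * α + β)
      ≤ M / (1 + ‖z‖ ^ α) * ‖(A ^ (m + 1)) x‖ / ‖z‖ ^ ((m : ℝ) * α + β) := by
        gcongr
        exact (R.le_opNorm _).trans (by gcongr)
    _ = M * ‖(A ^ (m + 1)) x‖ / (‖z‖ ^ ((m : ℝ) * α + β) * (1 + ‖z‖ ^ α)) := by
        rw [div_mul_eq_mul_div, div_div, mul_comm (1 + _)]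

/-- Neumann-expansion remainder bound for the scaled resolvent: if
`z^α I − A` is invertible with `‖(z^α I − A)⁻¹‖ ≤ M/(1 + |z|^α)`, then
`‖z^{α−β}(z^α I − A)⁻¹ x − z^{−β} ∑_{k=0}^{m} z^{−αk} A^k x‖
  ≤ M ‖A^{m+1} x‖ / (|z|^{mα+β} (1 + |z|^α))`. -/
theorem resolvent_neumann_remainder_bound
    {X : Type*} [NormedAddCommGroup X] [NormedSpace ℂ X] [CompleteSpace X]
    (A : X →L[ℂ] X) (α β : ℝ) (hα : 0 < α) (hβ : 1 ≤ β) (m : ℕ)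
    (z : ℂ) (hz : z ≠ 0) (M : ℝ) (hM : 0 < M)
    (hinv : IsUnit ((z ^ (α : ℂ)) • (1 : X →L[ℂ] X) - A))
    (hbound : ‖Ring.inverse ((z ^ (α : ℂ)) • (1 : X →L[ℂ] X) - A)‖
      ≤ M / (1 + ‖z‖ ^ α)) :
    ∀ x : X,
      ‖(z ^ ((α : ℂ) - (β : ℂ))) •
            (Ring.inverse ((z ^ (α : ℂ)) • (1 : X →L[ℂ] X) - A)) x
          - (z ^ (-(β : ℂ))) • ∑ k ∈ Finset.range (m + 1),
              (z ^ (-((α : ℂ) * (k : ℂ)))) • (A ^ k) x‖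
        ≤ M * ‖(A ^ (m + 1)) x‖ /
            (‖z‖ ^ ((m : ℝ) * α + β) * (1 + ‖z‖ ^ α)) :=
  resolvent_neumann_remainder_bound_general A α β m z hz M hinv hbound
end
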